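/- Let α : I → ℝ³ be a unit-speed curve with positive curvature κ and torsion τ satisfying κ(s) · cos( ∫₀ˢ τ(u) du + θ₀ ) = 1 for all s ∈ I and some constant θ₀. Then α lies on a sphere of radius 1, i.e. there exists a point c ∈ ℝ³ with ‖α(s) − c‖ = 1 for all s ∈ I. -/

import Mathlib

open scoped RealInnerProductSpace

noncomputable def det3 (a b c : EuclideanSpace ℝ (Fin 3)) : ℝ :=
  Matrix.det (Matrix.of ![(a : Fin 3 → ℝ), b, c])

abbrev E3 := EuclideanSpace ℝ (Fin 3)

noncomputable def cr (x y : E3) : E3 :=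
  WithLp.toLp 2 ![x 1 * y 2 - x 2 * y 1, x 2 * y 0 - x 0 * y 2, x 0 * y 1 - x 1 * y 0]

lemma lag (U V A : E3) :
    (⟪U,U⟫*⟪V,V⟫ - ⟪U,V⟫*⟪U,V⟫) • A
      = (⟪A,U⟫*⟪V,V⟫ - ⟪A,V⟫*⟪U,V⟫) • U + (⟪A,V⟫*⟪U,U⟫ - ⟪A,U⟫*⟪U,V⟫) • V
        + ⟪A, cr U V⟫ • cr U V := by
  ext i
  fin_cases i <;>
    simp [cr, PiLp.inner_apply, Fin.sum_univ_three, EuclideanSpace.real_norm_sq_eq] <;> ring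

lemma cr_self (V : E3) : cr V V = 0 := by
  ext i; fin_cases i <;> simp [cr] <;> ring

lemma cr_add_right (x y z : E3) : cr x (y + z) = cr x y + cr x z := by
  ext i; fin_cases i <;> simp [cr] <;> ring

lemma cr_smul_right (r : ℝ) (x y : E3) : cr x (r • y) = r • cr x y := by
  ext i; fin_cases i <;> simp [cr] <;> ring

lemma cr_cr (U V : E3) : cr U (cr U V) = ⟪U,V⟫ • U - ⟪U,U⟫ • V := by
  ext i; fin_cases i <;>
    simp [cr, PiLp.inner_apply, Fin.sum_univ_three, EuclideanSpace.real_norm_sq_eq] <;> ring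

lemma inner_cr_right (U V : E3) : ⟪cr U V, V⟫ = 0 := by
  simp [cr, PiLp.inner_apply, Fin.sum_univ_three]; ring

lemma inner_cr_cr (U V : E3) : ⟪cr U V, cr U V⟫ = ⟪U,U⟫*⟪V,V⟫ - ⟪U,V⟫*⟪U,V⟫ := by
  simp [cr, PiLp.inner_apply, Fin.sum_univ_three, EuclideanSpace.real_norm_sq_eq]; ring

lemma det3_eq (x y z : E3) : det3 x y z = ⟪z, cr x y⟫ := by
  simp [det3, cr, PiLp.inner_apply, Fin.sum_univ_three, Matrix.det_fin_three]; ring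

lemma hasDerivAt_E3 {f : ℝ → E3} {f' : E3} {x : ℝ}
    (h : ∀ i, HasDerivAt (fun t => f t i) (f' i) x) : HasDerivAt f f' x := by
  have h2 : HasDerivAt (fun t i => f t i) (fun i => f' i) x := hasDerivAt_pi.mpr h
  exact ((EuclideanSpace.equiv (Fin 3) ℝ).symm.toContinuousLinearMap.hasFDerivAt.comp_hasDerivAt
    x h2 : _)

lemma hasDerivAt_comp_E3 {f : ℝ → E3} {f' : E3} {x : ℝ} (h : HasDerivAt f f' x) (i : Fin 3) :
    HasDerivAt (fun t => f t i) (f' i) x := by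
  have h2 : HasDerivAt (fun t i => f t i) (fun i => f' i) x :=
    ((EuclideanSpace.equiv (Fin 3) ℝ).toContinuousLinearMap.hasFDerivAt.comp_hasDerivAt x h : _)
  exact hasDerivAt_pi.mp h2 i

lemma hasDerivAt_cr {f g : ℝ → E3} {f' g' : E3} {x : ℝ}
    (hf : HasDerivAt f f' x) (hg : HasDerivAt g g' x) :
    HasDerivAt (fun t => cr (f t) (g t)) (cr f' (g x) + cr (f x) g') x := by
  apply hasDerivAt_E3
  intro i
  have h0 := hasDerivAt_comp_E3 hf
  have h1 := hasDerivAt_comp_E3 hg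
  fin_cases i <;>
    simp only [cr, WithLp.ofLp_toLp, Fin.zero_eta, Fin.mk_one, Fin.reduceFinMk, PiLp.add_apply, Matrix.cons_val_zero, Matrix.cons_val_one, Matrix.head_cons,
      Matrix.cons_val_two, Matrix.tail_cons] <;>
  · refine (((h0 _).mul (h1 _)).sub ((h0 _).mul (h1 _))).congr_deriv ?_
    ring

/-- derivatives agree for functions equal on an open set -/
lemma deriv_eq_on {f₁ f₂ : ℝ → ℝ} {d₁ d₂ : ℝ} {s : ℝ} {I : Set ℝ} (hI : IsOpen I)
    (hs : s ∈ I) (heq : Set.EqOn f₁ f₂ I)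
    (h₁ : HasDerivAt f₁ d₁ s) (h₂ : HasDerivAt f₂ d₂ s) : d₁ = d₂ := by
  have h₂' : HasDerivAt f₁ d₂ s :=
    h₂.congr_of_eventuallyEq (Filter.eventuallyEq_of_mem (hI.mem_nhds hs) (fun t ht => heq ht))
  exact h₁.unique h₂'

set_option maxHeartbeats 1000000 in
theorem stmt_4 (a b : ℝ) (ha : a < 0) (hb : 0 < b) (θ₀ : ℝ)
    (α : ℝ → EuclideanSpace ℝ (Fin 3)) (κ τ : ℝ → ℝ)
    (hα : ContDiff ℝ (⊤ : ℕ∞) α)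
    (hunit : ∀ s ∈ Set.Ioo a b, ‖deriv α s‖ = 1)
    (hκ : ∀ s, κ s = ‖deriv (deriv α) s‖)
    (hκpos : ∀ s ∈ Set.Ioo a b, 0 < κ s)
    (hτ : ∀ s, τ s = det3 (deriv α s) (deriv (deriv α) s) (deriv (deriv (deriv α)) s) / κ s ^ 2)
    (hrel : ∀ s ∈ Set.Ioo a b,
      κ s * Real.cos ((∫ u in (0:ℝ)..s, τ u) + θ₀) = 1) :
    ∃ c : EuclideanSpace ℝ (Fin 3), ∀ s ∈ Set.Ioo a b, ‖α s - c‖ = 1 := by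
  set I : Set ℝ := Set.Ioo a b with hIdef
  have hI : IsOpen I := isOpen_Ioo
  have h0I : (0:ℝ) ∈ I := ⟨ha, hb⟩
  have hαinf : ContDiff ℝ ((⊤:ℕ∞):WithTop ℕ∞) α := hα.of_le (by simp)
  obtain ⟨hd0, hα1⟩ := contDiff_infty_iff_deriv.mp hαinf
  set u : ℝ → E3 := deriv α with hu_def
  obtain ⟨hd1, hα2⟩ := contDiff_infty_iff_deriv.mp hα1
  set v : ℝ → E3 := deriv u with hv_def
  obtain ⟨hd2, hα3⟩ := contDiff_infty_iff_deriv.mp hα2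
  set A : ℝ → E3 := deriv v with hA_def
  have hDα : ∀ s, HasDerivAt α (u s) s := fun s => (hd0 s).hasDerivAt
  have hDu : ∀ s, HasDerivAt u (v s) s := fun s => (hd1 s).hasDerivAt
  have hDv : ∀ s, HasDerivAt v (A s) s := fun s => (hd2 s).hasDerivAt
  -- θ and its derivative
  set θ : ℝ → ℝ := fun s => (∫ x in (0:ℝ)..s, τ x) + θ₀ with hθdef
  -- continuity of τ on I
  have hAcont : Continuous A := hα3.continuous
  have hvcont : Continuous v := hα2.continuous
  have hucont : Continuous u := hα1.continuous
  have hwcont : Continuous (fun s => cr (u s) (v s)) := by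
    rw [continuous_iff_continuousAt]
    exact fun s => (hasDerivAt_cr (hDu s) (hDv s)).continuousAt
  have hκcont : Continuous κ := by
    have : κ = fun s => ‖v s‖ := funext hκ
    rw [this]; exact hvcont.norm
  have hτcont : ContinuousOn τ I := by
    have : τ = fun s => ⟪A s, cr (u s) (v s)⟫ / κ s ^ 2 := by
      funext s; rw [hτ s, det3_eq]
    rw [this]
    apply ContinuousOn.div
    · exact ((hAcont.inner hwcont)).continuousOn
    · exact (hκcont.pow 2).continuousOn
    · intro s hs
      exact pow_ne_zero 2 (ne_of_gt (hκpos s hs))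
  have hDθ : ∀ s ∈ I, HasDerivAt θ (τ s) s := by
    intro s hs
    have hsub : Set.uIcc (0:ℝ) s ⊆ I := Set.OrdConnected.uIcc_subset Set.ordConnected_Ioo h0I hs
    have hint : IntervalIntegrable τ MeasureTheory.volume 0 s :=
      (hτcont.mono hsub).intervalIntegrable
    have hmeas := ContinuousOn.stronglyMeasurableAtFilter (μ := MeasureTheory.volume) hI hτcont s hs
    have hcont : ContinuousAt τ s := hτcont.continuousAt (hI.mem_nhds hs)
    exact (intervalIntegral.integral_hasDerivAt_right hint hmeas hcont).add_const θ₀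
  -- pointwise facts on I
  have hUU : ∀ s ∈ I, ⟪u s, u s⟫ = 1 := by
    intro s hs
    rw [real_inner_self_eq_norm_sq, hunit s hs]; norm_num
  have hUV : ∀ s ∈ I, ⟪u s, v s⟫ = 0 := by
    intro s hs
    have h1 : HasDerivAt (fun t => ⟪u t, u t⟫) (⟪u s, v s⟫ + ⟪v s, u s⟫) s :=
      (hDu s).inner ℝ (hDu s)
    have h2 : HasDerivAt (fun _ : ℝ => (1:ℝ)) 0 s := hasDerivAt_const s 1
    have h3 := deriv_eq_on hI hs (fun t ht => hUU t ht) h1 h2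
    have hc := real_inner_comm (u s) (v s)
    linarith
  have hVVκ : ∀ s ∈ I, ⟪v s, v s⟫ = κ s ^ 2 := by
    intro s hs
    rw [real_inner_self_eq_norm_sq, hκ s]
  have hUA : ∀ s ∈ I, ⟪u s, A s⟫ = -(κ s ^ 2) := by
    intro s hs
    have h1 : HasDerivAt (fun t => ⟪u t, v t⟫) (⟪u s, A s⟫ + ⟪v s, v s⟫) s :=
      (hDu s).inner ℝ (hDv s)
    have h2 : HasDerivAt (fun _ : ℝ => (0:ℝ)) 0 s := hasDerivAt_const s 0
    have := deriv_eq_on hI hs (fun t ht => hUV t ht) h1 h2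
    rw [hVVκ s hs] at this
    linarith
  -- relation facts
  have hKC : ∀ s ∈ I, κ s * Real.cos (θ s) = 1 := fun s hs => hrel s hs
  have hCpos : ∀ s ∈ I, 0 < Real.cos (θ s) := by
    intro s hs
    rcases lt_trichotomy (Real.cos (θ s)) 0 with h | h | h
    · nlinarith [hKC s hs, hκpos s hs]
    · exfalso; have := hKC s hs; rw [h] at this; simp at this
    · exact h
  have hκeq : ∀ s ∈ I, κ s = (Real.cos (θ s))⁻¹ := by
    intro s hs
    exact eq_inv_of_mul_eq_one_left (hKC s hs)
  -- F6 : ⟪A, v⟫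
  have hAV : ∀ s ∈ I, ⟪A s, v s⟫ = Real.sin (θ s) * τ s / Real.cos (θ s) ^ 3 := by
    intro s hs
    have h1 : HasDerivAt (fun t => ⟪v t, v t⟫) (⟪v s, A s⟫ + ⟪A s, v s⟫) s :=
      (hDv s).inner ℝ (hDv s)
    have hCne : Real.cos (θ s) ≠ 0 := ne_of_gt (hCpos s hs)
    have hcosd : HasDerivAt (fun t => Real.cos (θ t)) (-Real.sin (θ s) * τ s) s :=
      (hDθ s hs).cos
    have h2 : HasDerivAt (fun t => ((Real.cos (θ t))⁻¹) ^ 2)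
        (2 * (Real.cos (θ s))⁻¹ ^ 1 * (-(-Real.sin (θ s) * τ s) / Real.cos (θ s) ^ 2)) s :=
      (hcosd.inv hCne).pow 2
    have heq : Set.EqOn (fun t => ⟪v t, v t⟫) (fun t => ((Real.cos (θ t))⁻¹) ^ 2) I := by
      intro t ht
      simp only
      rw [hVVκ t ht, hκeq t ht]
    have hder := deriv_eq_on hI hs heq h1 h2
    have hc : ⟪v s, A s⟫ = ⟪A s, v s⟫ := real_inner_comm _ _
    rw [hc] at hder
    set X := ⟪A s, v s⟫ with hX
    field_simp at hder ⊢
    linarith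
  -- F7
  have hAW : ∀ s ∈ I, ⟪A s, cr (u s) (v s)⟫ = τ s * κ s ^ 2 := by
    intro s hs
    have h := hτ s
    rw [det3_eq] at h
    have hk : κ s ^ 2 ≠ 0 := pow_ne_zero 2 (ne_of_gt (hκpos s hs))
    rw [h, div_mul_cancel₀ _ hk]
  -- decomposition of A
  have hAdec : ∀ s ∈ I, A s = (-(κ s ^ 2)) • u s
      + (Real.sin (θ s) * τ s * κ s) • v s + τ s • cr (u s) (v s) := by
    intro s hs
    have hl := lag (u s) (v s) (A s)
    rw [hUU s hs, hUV s hs, hVVκ s hs, real_inner_comm (u s) (A s), hUA s hs,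
      hAV s hs, hAW s hs] at hl
    have hk : κ s ≠ 0 := ne_of_gt (hκpos s hs)
    have hC : Real.cos (θ s) ≠ 0 := ne_of_gt (hCpos s hs)
    have hKCs := hKC s hs
    have h2 : (κ s ^ 2) • A s = (κ s ^ 2) • ((-(κ s ^ 2)) • u s
        + (Real.sin (θ s) * τ s * κ s) • v s + τ s • cr (u s) (v s)) := by
      calc (κ s ^ 2) • A s = (1 * κ s ^ 2 - 0 * 0) • A s := by norm_num
        _ = _ := by
            rw [hl]
            match_scalars
            · ring
            · field_simp
              linear_combination (-(Real.sin (θ s) * τ s) *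
                (κ s ^2 * Real.cos (θ s)^2 + κ s * Real.cos (θ s) + 1)) * hKCs
            · ring
    exact smul_right_injective E3 (pow_ne_zero 2 hk) h2
  have hcrUA : ∀ s ∈ I, cr (u s) (A s)
      = (Real.sin (θ s) * τ s * κ s) • cr (u s) (v s) - τ s • v s := by
    intro s hs
    rw [hAdec s hs, cr_add_right, cr_add_right, cr_smul_right, cr_smul_right, cr_smul_right,
      cr_self, cr_cr, hUU s hs, hUV s hs]
    match_scalars <;> ring
  -- the center function
  set g : ℝ → E3 := fun t => α t + (Real.cos (θ t))^2 • v t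
      - (Real.sin (θ t) * Real.cos (θ t)) • cr (u t) (v t) with hgdef
  have hg0 : ∀ s ∈ I, HasDerivWithinAt g 0 I s := by
    intro s hs
    have hθs := hDθ s hs
    have hcosd : HasDerivAt (fun t => Real.cos (θ t)) (-Real.sin (θ s) * τ s) s := hθs.cos
    have hsind : HasDerivAt (fun t => Real.sin (θ t)) (Real.cos (θ s) * τ s) s := hθs.sin
    have h1 : HasDerivAt (fun t => (Real.cos (θ t))^2)
        (2 * Real.cos (θ s) ^ 1 * (-Real.sin (θ s) * τ s)) s := hcosd.pow 2
    have h2 : HasDerivAt (fun t => (Real.cos (θ t))^2 • v t)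
        ((Real.cos (θ s))^2 • A s
          + (2 * Real.cos (θ s) ^ 1 * (-Real.sin (θ s) * τ s)) • v s) s := h1.smul (hDv s)
    have h3 : HasDerivAt (fun t => Real.sin (θ t) * Real.cos (θ t))
        (Real.cos (θ s) * τ s * Real.cos (θ s)
          + Real.sin (θ s) * (-Real.sin (θ s) * τ s)) s := hsind.mul hcosd
    have h4 : HasDerivAt (fun t => (Real.sin (θ t) * Real.cos (θ t)) • cr (u t) (v t))
        ((Real.sin (θ s) * Real.cos (θ s)) • (cr (v s) (v s) + cr (u s) (A s))
          + (Real.cos (θ s) * τ s * Real.cos (θ s) + Real.sin (θ s) * (-Real.sin (θ s) * τ s))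
            • cr (u s) (v s)) s :=
      h3.smul (hasDerivAt_cr (hDu s) (hDv s))
    have hg : HasDerivAt g
        (u s + ((Real.cos (θ s))^2 • A s
          + (2 * Real.cos (θ s) ^ 1 * (-Real.sin (θ s) * τ s)) • v s)
        - ((Real.sin (θ s) * Real.cos (θ s)) • (cr (v s) (v s) + cr (u s) (A s))
          + (Real.cos (θ s) * τ s * Real.cos (θ s) + Real.sin (θ s) * (-Real.sin (θ s) * τ s))
            • cr (u s) (v s))) s :=
      ((hDα s).add h2).sub h4
    have hzero : (u s + ((Real.cos (θ s))^2 • A s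
          + (2 * Real.cos (θ s) ^ 1 * (-Real.sin (θ s) * τ s)) • v s)
        - ((Real.sin (θ s) * Real.cos (θ s)) • (cr (v s) (v s) + cr (u s) (A s))
          + (Real.cos (θ s) * τ s * Real.cos (θ s) + Real.sin (θ s) * (-Real.sin (θ s) * τ s))
            • cr (u s) (v s))) = 0 := by
      rw [cr_self, hcrUA s hs, hAdec s hs]
      have hKCs := hKC s hs
      have hpy := Real.sin_sq_add_cos_sq (θ s)
      match_scalars
      · linear_combination (-(Real.cos (θ s) * κ s) - 1) * hKCs
      · linear_combination (Real.sin (θ s) * τ s * Real.cos (θ s)) * hKCs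
      · linear_combination (-(τ s * Real.sin (θ s)^2)) * hKCs
    rw [hzero] at hg
    exact hg.hasDerivWithinAt
  -- g is constant on I
  have hconst : ∀ s ∈ I, g s = g 0 := by
    intro s hs
    have hcvx : Convex ℝ I := convex_Ioo a b
    have := Convex.norm_image_sub_le_of_norm_hasDerivWithin_le
      (f := g) (f' := fun _ => (0:E3)) (C := 0)
      (fun x hx => hg0 x hx) (fun x _ => by simp) hcvx h0I hs
    simp at this
    exact sub_eq_zero.mp this
  -- conclusion
  refine ⟨g 0, fun s hs => ?_⟩
  have hgs : g s = g 0 := hconst s hs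
  have hx : α s - g 0 = (Real.sin (θ s) * Real.cos (θ s)) • cr (u s) (v s)
      - (Real.cos (θ s))^2 • v s := by
    rw [← hgs, hgdef]
    module
  rw [hx]
  have hKCs := hKC s hs
  have hpy := Real.sin_sq_add_cos_sq (θ s)
  have hin : ⟪(Real.sin (θ s) * Real.cos (θ s)) • cr (u s) (v s) - (Real.cos (θ s))^2 • v s,
      (Real.sin (θ s) * Real.cos (θ s)) • cr (u s) (v s) - (Real.cos (θ s))^2 • v s⟫ = 1 := by
    rw [inner_sub_left, inner_sub_right, inner_sub_right, real_inner_smul_left,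
      real_inner_smul_left, real_inner_smul_left, real_inner_smul_left,
      real_inner_smul_right, real_inner_smul_right, real_inner_smul_right,
      real_inner_smul_right]
    rw [inner_cr_cr, inner_cr_right, real_inner_comm (cr (u s) (v s)) (v s), inner_cr_right,
      hUU s hs, hUV s hs, hVVκ s hs]
    linear_combination (κ s^2 * Real.cos (θ s)^2) * hpy
      + (κ s * Real.cos (θ s) + 1) * hKCs
  have hnorm : ‖(Real.sin (θ s) * Real.cos (θ s)) • cr (u s) (v s)
      - (Real.cos (θ s))^2 • v s‖ ^ 2 = 1 := by
    rw [← real_inner_self_eq_norm_sq]; exact hin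
  nlinarith [norm_nonneg ((Real.sin (θ s) * Real.cos (θ s)) • cr (u s) (v s)
      - (Real.cos (θ s))^2 • v s), hnorm]
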